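/- Let G be a connected graph on n vertices, n odd, such that exactly one vertex v has transmission n−1 and all other n−1 vertices have transmission n. Then G is isomorphic to the complete multipartite graph K_{1,2,...,2} with one part {v} of size 1 and (n−1)/2 parts of size 2. -/

import Mathlib

open SimpleGraph Matrix Finset BigOperators

/-- The distance matrix of a graph on `Fin n`, with real entries `d(u,v)`. -/
noncomputable def distMatrix {n : ℕ} (G : SimpleGraph (Fin n)) : Matrix (Fin n) (Fin n) ℝ :=
  fun u v => (G.dist u v : ℝ)

lemma distMatrix_isHermitian {n : ℕ} (G : SimpleGraph (Fin n)) :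
    (distMatrix G).IsHermitian := by
  unfold Matrix.IsHermitian
  ext u v
  simp [distMatrix, Matrix.conjTranspose_apply, SimpleGraph.dist_comm]

/-- The distance spectral radius: the largest eigenvalue of the distance matrix. -/
noncomputable def lambda1 {n : ℕ} (G : SimpleGraph (Fin n)) : ℝ :=
  ⨆ i, (distMatrix_isHermitian G).eigenvalues i

/-- The transmission of a vertex: the sum of distances to all other vertices. -/
noncomputable def transmission {n : ℕ} (G : SimpleGraph (Fin n)) (v : Fin n) : ℕ :=
  ∑ u, G.dist v u

/-- The maximum transmission. -/
noncomputable def Dmax {n : ℕ} (G : SimpleGraph (Fin n)) : ℕ :=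
  Finset.univ.sup (transmission G)

/-- The minimum transmission. -/
noncomputable def Dmin {n : ℕ} (G : SimpleGraph (Fin n)) : ℕ :=
  sInf (Set.range (transmission G))

/-- The Wiener index: half the sum of all transmissions. -/
noncomputable def wiener {n : ℕ} (G : SimpleGraph (Fin n)) : ℝ :=
  (∑ v, (transmission G v : ℝ)) / 2

/-- The complete multipartite graph `K_{1,2,…,2}` on `n = 2r-1` vertices:
vertex `0` forms the part of size 1, and `{2i-1, 2i}` are the parts of size 2. -/
def K122 (n : ℕ) : SimpleGraph (Fin n) where
  Adj u v := u ≠ v ∧ ¬(u.val ≠ 0 ∧ v.val ≠ 0 ∧ (u.val + 1) / 2 = (v.val + 1) / 2)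
  symm := by
    constructor
    intro u v h
    exact ⟨h.1.symm, fun hc => h.2 ⟨hc.2.1, hc.1, hc.2.2.symm⟩⟩
  loopless := by
    constructor
    intro u h
    exact h.1 rfl

/-! A vertex `w` of a connected graph is at distance `0` from itself, `1` from its neighbours
and at least `2` from everything else, so `transmission w + deg w + 2 ≥ 2n`, with equality
exactly when every vertex is within distance `2` of `w`. Transmission `n - 1` therefore makes `v`
adjacent to all other vertices; then `G` has diameter at most `2`, and transmission `n` gives
every `w ≠ v` degree `n - 2`. So the complement of `G` is a perfect matching of `V ∖ {v}`, the
graph of an involution fixing only `v`. The complement of `K122 n` is the graph of such an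
involution as well, and two involutions with the same number of fixed points are conjugate;
the conjugating permutation is the isomorphism. -/

namespace Equiv.Perm

variable {α : Type*} [Fintype α] [DecidableEq α]

theorem cycleType_of_involutive {σ : Perm α} (hσ : Function.Involutive σ) :
    σ.cycleType = Multiset.replicate (#σ.support / 2) 2 := by
  have : Fact (Nat.Prime 2) := ⟨Nat.prime_two⟩
  have hc := cycleType_of_pow_prime_eq_one (σ := σ) (p := 2) (by ext x; simp [sq, hσ x])
  have hs := σ.sum_cycleType
  rw [hc, Multiset.sum_replicate, smul_eq_mul] at hs
  rw [hc, ← hs, Nat.mul_div_cancel _ two_pos]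

theorem isConj_of_involutive {σ τ : Perm α} (hσ : Function.Involutive σ)
    (hτ : Function.Involutive τ) (h : #σ.support = #τ.support) : IsConj σ τ := by
  rw [isConj_iff_cycleType_eq, cycleType_of_involutive hσ, cycleType_of_involutive hτ, h]

theorem card_support_of_apply_eq_self_iff {σ : Perm α} {a : α} (h : ∀ x, σ x = x ↔ x = a) :
    #σ.support = Fintype.card α - 1 := by
  have : σ.support = univ.erase a := by ext x; simp [h]
  rw [this, card_erase_of_mem (mem_univ a), card_univ]

end Equiv.Perm

namespace SimpleGraph

variable {V : Type*} {G : SimpleGraph V}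

theorem IsUniversal.dist_le_two {v : V} (hv : G.IsUniversal v) (a b : V) : G.dist a b ≤ 2 := by
  by_cases hab : a = b
  · simp [hab]
  by_cases hav : a = v
  · subst hav; exact (dist_eq_one_iff_adj.mpr (hv hab)).le.trans one_le_two
  by_cases hbv : b = v
  · subst hbv; exact (dist_eq_one_iff_adj.mpr (hv (Ne.symm hab)).symm).le.trans one_le_two
  exact dist_le (.cons (hv (Ne.symm hav)).symm (.cons (hv (Ne.symm hbv)) .nil))

theorem nonempty_iso_of_isConj {H : SimpleGraph V} {σ τ : Equiv.Perm V} (hστ : IsConj σ τ)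
    (hG : ∀ a b, G.Adj a b ↔ a ≠ b ∧ σ a ≠ b) (hH : ∀ a b, H.Adj a b ↔ a ≠ b ∧ τ a ≠ b) :
    Nonempty (G ≃g H) := by
  obtain ⟨c, hc⟩ := isConj_iff.mp hστ
  have hcomm (x : V) : τ (c x) = c (σ x) := by rw [← hc]; simp
  exact ⟨⟨c, fun {a b} => by rw [hH, hG, hcomm]; simp⟩⟩

variable [Fintype V] [DecidableRel G.Adj]

theorem exists_involutive_adj_iff_of_degree_le_one (h : ∀ v, G.degree v ≤ 1) :
    ∃ σ : Equiv.Perm V, Function.Involutive σ ∧ (∀ a b, G.Adj a b ↔ a ≠ b ∧ σ a = b) ∧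
      ∀ a, σ a = a ↔ G.degree a = 0 := by
  classical
  have huniq {a b c : V} (hb : G.Adj a b) (hc : G.Adj a c) : b = c :=
    Finset.card_le_one.mp ((card_neighborFinset_eq_degree G a).trans_le (h a)) b
      ((mem_neighborFinset G a b).mpr hb) c ((mem_neighborFinset G a c).mpr hc)
  let f : V → V := fun a => if hb : ∃ b, G.Adj a b then hb.choose else a
  have hf_adj {a b : V} (hab : G.Adj a b) : f a = b := by
    simp only [f, dif_pos (⟨b, hab⟩ : ∃ b, G.Adj a b)]
    exact huniq (Exists.choose_spec ⟨b, hab⟩) hab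
  have hf_isolated {a : V} (ha : ¬∃ b, G.Adj a b) : f a = a := dif_neg ha
  have hf : Function.Involutive f := by
    intro a
    by_cases ha : ∃ b, G.Adj a b
    · obtain ⟨b, hab⟩ := ha
      rw [hf_adj hab, hf_adj hab.symm]
    · rw [hf_isolated ha, hf_isolated ha]
  have hfix (a : V) : f a = a ↔ ¬∃ b, G.Adj a b :=
    ⟨fun hfa ⟨b, hab⟩ => hab.ne (hfa.symm.trans (hf_adj hab)), hf_isolated⟩
  refine ⟨hf.toPerm f, hf, fun a b => ?_, fun a => ?_⟩
  · rw [Function.Involutive.coe_toPerm]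
    refine ⟨fun hab => ⟨hab.ne, hf_adj hab⟩, ?_⟩
    rintro ⟨hne, rfl⟩
    obtain ⟨b, hab⟩ := not_not.mp (mt (hfix a).mpr hne.symm)
    rwa [hf_adj hab]
  · rw [Function.Involutive.coe_toPerm, hfix, ← degree_pos_iff_exists_adj]
    omega

theorem Connected.sum_dist_add_degree (hG : G.Connected) (w : V) :
    ∑ u, G.dist w u + G.degree w + 2 = 2 * Fintype.card V + ∑ u, (G.dist w u - 2) := by
  classical
  have hdeg : G.degree w = ∑ u, if G.Adj w u then 1 else 0 := by
    rw [← card_neighborFinset_eq_degree, neighborFinset_eq_filter, Finset.sum_boole,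
      Nat.cast_id]
  have htwo : ∑ u, (if w = u then 2 else 0) = 2 := by simp
  have hpoint (u : V) : G.dist w u + (if G.Adj w u then 1 else 0) + (if w = u then 2 else 0)
      = 2 + (G.dist w u - 2) := by
    by_cases hwu : w = u
    · simp [hwu]
    by_cases hadj : G.Adj w u
    · simp [hwu, hadj, dist_eq_one_iff_adj.mpr hadj]
    have h0 : G.dist w u ≠ 0 := fun h => hwu (hG.dist_eq_zero_iff.mp h)
    have h1 : G.dist w u ≠ 1 := fun h => hadj (dist_eq_one_iff_adj.mp h)
    simp only [hwu, hadj, if_false]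
    omega
  calc ∑ u, G.dist w u + G.degree w + 2
      = ∑ u, (G.dist w u + (if G.Adj w u then 1 else 0) + if w = u then 2 else 0) := by
        rw [Finset.sum_add_distrib, Finset.sum_add_distrib, hdeg, htwo]
    _ = ∑ u, (2 + (G.dist w u - 2)) := Finset.sum_congr rfl fun u _ => hpoint u
    _ = 2 * Fintype.card V + ∑ u, (G.dist w u - 2) := by
        rw [Finset.sum_add_distrib, Finset.sum_const, Finset.card_univ, smul_eq_mul, mul_comm]

theorem Connected.isUniversal_of_sum_dist_eq (hG : G.Connected) {v : V}
    (hv : ∑ u, G.dist v u = Fintype.card V - 1) : G.IsUniversal v := by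
  have h := hG.sum_dist_add_degree v
  have hlt := G.degree_lt_card_verts v
  rw [← degree_eq_card_sub_one]
  omega

theorem Connected.compl_degree_eq_one_of_sum_dist_eq [DecidableEq V] (hG : G.Connected)
    {v w : V} (hv : G.IsUniversal v) (hw : ∑ u, G.dist w u = Fintype.card V) : Gᶜ.degree w = 1 := by
  have h := hG.sum_dist_add_degree w
  rw [Finset.sum_eq_zero fun u _ => Nat.sub_eq_zero_of_le (hv.dist_le_two w u)] at h
  rw [degree_compl]
  omega

end SimpleGraph

def k122Partner (x : ℕ) : ℕ := if x = 0 then 0 else if x % 2 = 1 then x + 1 else x - 1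

theorem k122Partner_involutive : Function.Involutive k122Partner := by
  intro x
  unfold k122Partner
  grind

theorem k122Partner_lt {n x : ℕ} (hn : Odd n) (hx : x < n) : k122Partner x < n := by
  have := Nat.odd_iff.mp hn
  unfold k122Partner
  split_ifs <;> omega

def k122Perm (n : ℕ) (hn : Odd n) : Equiv.Perm (Fin n) :=
  Function.Involutive.toPerm (fun x => ⟨k122Partner x, k122Partner_lt hn x.isLt⟩)
    fun x => Fin.ext (k122Partner_involutive x)

theorem k122Perm_involutive {n : ℕ} (hn : Odd n) : Function.Involutive (k122Perm n hn) :=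
  fun x => Fin.ext (k122Partner_involutive x)

theorem k122Perm_apply_eq_self_iff {n : ℕ} (hn : Odd n) (x : Fin n) :
    k122Perm n hn x = x ↔ x = ⟨0, hn.pos⟩ := by
  simp only [k122Perm, Function.Involutive.coe_toPerm, Fin.ext_iff, k122Partner]
  grind

theorem K122_adj_iff {n : ℕ} (hn : Odd n) (x y : Fin n) :
    (K122 n).Adj x y ↔ x ≠ y ∧ k122Perm n hn x ≠ y := by
  simp only [K122, k122Perm, Function.Involutive.coe_toPerm, ne_eq, Fin.ext_iff, k122Partner]
  split_ifs <;> omega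

theorem stmt13 (n : ℕ) (hodd : Odd n) (G : SimpleGraph (Fin n)) (hG : G.Connected)
    (v : Fin n) (hv : transmission G v = n - 1)
    (hw : ∀ w : Fin n, w ≠ v → transmission G w = n) :
    Nonempty (G ≃g K122 n) := by
  classical
  have hvU : G.IsUniversal v := hG.isUniversal_of_sum_dist_eq (by rwa [Fintype.card_fin])
  have hdeg (w : Fin n) : Gᶜ.degree w = if w = v then 0 else 1 := by
    split_ifs with hwv
    · rw [degree_compl, (degree_eq_card_sub_one G w).mpr (hwv ▸ hvU), Nat.sub_self]
    · exact hG.compl_degree_eq_one_of_sum_dist_eq hvU (by rw [Fintype.card_fin]; exact hw w hwv)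
  obtain ⟨σ, hσ, hσadj, hσfix⟩ :=
    exists_involutive_adj_iff_of_degree_le_one (G := Gᶜ) fun w => by rw [hdeg]; split_ifs <;> simp
  have hGσ (a b : Fin n) : G.Adj a b ↔ a ≠ b ∧ σ a ≠ b := by
    have hab := hσadj a b
    rw [compl_adj] at hab
    have hne := @Adj.ne _ G a b
    tauto
  have hσv (x : Fin n) : σ x = x ↔ x = v := by
    rw [hσfix, hdeg]
    split_ifs <;> simp [*]
  have hconj : IsConj σ (k122Perm n hodd) := by
    refine Equiv.Perm.isConj_of_involutive hσ (k122Perm_involutive hodd) ?_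
    rw [Equiv.Perm.card_support_of_apply_eq_self_iff hσv,
      Equiv.Perm.card_support_of_apply_eq_self_iff (k122Perm_apply_eq_self_iff hodd)]
  exact nonempty_iso_of_isConj hconj hGσ (K122_adj_iff hodd)
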